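/- Let G be a simple graph on n vertices with at least one edge, S a vertex set such that G − S is disconnected, and X, Y a partition of V∖S into two nonempty parts with no edges between them and |X| ≤ |Y|. Then |S| ≥ 2μ_2 |X| / (μ_n − μ_2), provided μ_n > μ_2. -/

import Mathlib

open SimpleGraph Matrix

/-- The (unordered) eigenvalues of the Laplacian matrix `L = D - A` of `G`. -/
noncomputable def lapEigs {V : Type*} [Fintype V] [DecidableEq V]
    (G : SimpleGraph V) [DecidableRel G.Adj] : V → ℝ :=
  (SimpleGraph.posSemidef_lapMatrix ℝ G).1.eigenvalues

/-- `μ : Fin n → ℝ` is the nondecreasing list of the Laplacian eigenvalues of `G`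
(so `μ 0 = μ_1 ≤ μ 1 = μ_2 ≤ … ≤ μ (n-1) = μ_n`). -/
def IsLapSpectrum {V : Type*} [Fintype V] [DecidableEq V]
    (G : SimpleGraph V) [DecidableRel G.Adj] {n : ℕ} (μ : Fin n → ℝ) : Prop :=
  Monotone μ ∧ ∃ σ : Fin n ≃ V, ∀ i, μ i = lapEigs G (σ i)

/-- The number of connected components of `G - S`. -/
noncomputable def numComp {V : Type*} (G : SimpleGraph V) (S : Finset V) : ℕ :=
  Nat.card (G.induce ((↑S : Set V)ᶜ)).ConnectedComponent


section helpers
variable {m : Type*} [Fintype m] [DecidableEq m]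

lemma unitary_mul_star' (A : Matrix m m ℝ) (hA : A.IsHermitian) :
    (hA.eigenvectorUnitary : Matrix m m ℝ) * star (hA.eigenvectorUnitary : Matrix m m ℝ) = 1 :=
  (Unitary.mem_iff.mp hA.eigenvectorUnitary.prop).2

noncomputable def coeffs (A : Matrix m m ℝ) (hA : A.IsHermitian) (z : m → ℝ) : m → ℝ :=
  star (hA.eigenvectorUnitary : Matrix m m ℝ) *ᵥ z

lemma quad_eq (A : Matrix m m ℝ) (hA : A.IsHermitian) (z : m → ℝ) :
    z ⬝ᵥ (A *ᵥ z) = ∑ i, hA.eigenvalues i * (coeffs A hA z i)^2 := by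
  set U := (hA.eigenvectorUnitary : Matrix m m ℝ) with hU
  have hdiag : Matrix.diagonal (RCLike.ofReal ∘ hA.eigenvalues) = Matrix.diagonal hA.eigenvalues := by
    congr 1
  have hAeq : A = U * Matrix.diagonal hA.eigenvalues * star U := by
    rw [← hdiag]; exact hA.spectral_theorem
  have hc : coeffs A hA z = z ᵥ* U := by
    rw [coeffs, ← mulVec_transpose, Matrix.star_eq_conjTranspose,
      Matrix.conjTranspose_eq_transpose_of_trivial]
  conv_lhs => rw [hAeq]
  rw [← Matrix.mulVec_mulVec, ← Matrix.mulVec_mulVec, dotProduct_mulVec, ← hc]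
  show coeffs A hA z ⬝ᵥ _ = _
  rw [show star U *ᵥ z = coeffs A hA z from rfl]
  simp only [dotProduct, Matrix.mulVec_diagonal]
  exact Finset.sum_congr rfl fun i _ => by ring

lemma norm_eq (A : Matrix m m ℝ) (hA : A.IsHermitian) (z : m → ℝ) :
    z ⬝ᵥ z = ∑ i, (coeffs A hA z i)^2 := by
  set U := (hA.eigenvectorUnitary : Matrix m m ℝ) with hU
  have hc : coeffs A hA z = z ᵥ* U := by
    rw [coeffs, ← mulVec_transpose, Matrix.star_eq_conjTranspose,
      Matrix.conjTranspose_eq_transpose_of_trivial]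
  have hz : z = U *ᵥ coeffs A hA z := by
    rw [coeffs, Matrix.mulVec_mulVec, unitary_mul_star', Matrix.one_mulVec]
  nth_rewrite 2 [hz]
  rw [dotProduct_mulVec, ← hc]
  simp only [dotProduct]
  exact Finset.sum_congr rfl fun i _ => by ring

lemma coeffs_apply (A : Matrix m m ℝ) (hA : A.IsHermitian) (z : m → ℝ) (i : m) :
    coeffs A hA z i = ∑ j, (hA.eigenvectorUnitary : Matrix m m ℝ) j i * z j := by
  simp only [coeffs, Matrix.mulVec, dotProduct, Matrix.star_apply, star_trivial]

lemma eigcol (A : Matrix m m ℝ) (hA : A.IsHermitian) (i : m) :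
    A *ᵥ (fun j => (hA.eigenvectorUnitary : Matrix m m ℝ) j i)
      = hA.eigenvalues i • (fun j => (hA.eigenvectorUnitary : Matrix m m ℝ) j i) := by
  have h := hA.mulVec_eigenvectorBasis i
  have he : (fun j => (hA.eigenvectorUnitary : Matrix m m ℝ) j i)
      = (WithLp.equiv 2 (m → ℝ)) (hA.eigenvectorBasis i) := by
    funext j; exact hA.eigenvectorUnitary_apply j i
  rw [he]; exact h

end helpers

section rayleigh
variable {n : ℕ}

lemma lapEigs_eq (G : SimpleGraph (Fin n)) [DecidableRel G.Adj] (μ : Fin n → ℝ)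
    (σ : Fin n ≃ Fin n) (hσ : ∀ i, μ i = lapEigs G (σ i)) (i : Fin n) :
    lapEigs G i = μ (σ.symm i) := by
  rw [hσ, Equiv.apply_symm_apply]

lemma mu_zero_eq (hn : 1 ≤ n) (G : SimpleGraph (Fin n)) [DecidableRel G.Adj]
    (μ : Fin n → ℝ) (hμ : IsLapSpectrum G μ) : μ ⟨0, by omega⟩ = 0 := by
  obtain ⟨hmono, σ, hσ⟩ := hμ
  have hdet : (G.lapMatrix ℝ).det = 0 := by
    rw [← Matrix.exists_mulVec_eq_zero_iff]
    refine ⟨fun _ => 1, ?_, G.lapMatrix_mulVec_const_eq_zero⟩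
    intro h
    have := congrFun h ⟨0, by omega⟩
    simp at this
  have hH : (G.lapMatrix ℝ).IsHermitian := (SimpleGraph.posSemidef_lapMatrix ℝ G).1
  have hprod : ∏ i, lapEigs G i = 0 := by
    have := hH.det_eq_prod_eigenvalues
    rw [hdet] at this
    exact_mod_cast this.symm
  obtain ⟨i, _, hi⟩ := Finset.prod_eq_zero_iff.mp hprod
  have h0 : μ (σ.symm i) = 0 := by rw [← lapEigs_eq G μ σ hσ, hi]
  have hnn : 0 ≤ μ ⟨0, by omega⟩ := by
    rw [hσ]; exact (SimpleGraph.posSemidef_lapMatrix ℝ G).eigenvalues_nonneg _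
  have hle : μ ⟨0, by omega⟩ ≤ μ (σ.symm i) := hmono (by simp [Fin.le_def])
  linarith

lemma rayleigh_upper (hn : 2 ≤ n) (G : SimpleGraph (Fin n)) [DecidableRel G.Adj]
    (μ : Fin n → ℝ) (hμ : IsLapSpectrum G μ) (z : Fin n → ℝ) :
    z ⬝ᵥ (G.lapMatrix ℝ *ᵥ z) ≤ μ ⟨n - 1, by omega⟩ * (z ⬝ᵥ z) := by
  obtain ⟨hmono, σ, hσ⟩ := hμ
  have hH : (G.lapMatrix ℝ).IsHermitian := (SimpleGraph.posSemidef_lapMatrix ℝ G).1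
  rw [quad_eq _ hH z, norm_eq _ hH z, Finset.mul_sum]
  refine Finset.sum_le_sum fun i _ => ?_
  have h1 : hH.eigenvalues i = μ (σ.symm i) := lapEigs_eq G μ σ hσ i
  have h2 : μ (σ.symm i) ≤ μ ⟨n - 1, by omega⟩ := by
    apply hmono
    simp only [Fin.le_def]
    have := (σ.symm i).isLt
    omega
  nlinarith [sq_nonneg (coeffs (G.lapMatrix ℝ) hH z i)]

lemma rayleigh_lower (hn : 2 ≤ n) (G : SimpleGraph (Fin n)) [DecidableRel G.Adj]
    (μ : Fin n → ℝ) (hμ : IsLapSpectrum G μ) (z : Fin n → ℝ) (hz : ∑ i, z i = 0) :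
    μ ⟨1, by omega⟩ * (z ⬝ᵥ z) ≤ z ⬝ᵥ (G.lapMatrix ℝ *ᵥ z) := by
  have hmu0 := mu_zero_eq (by omega) G μ hμ
  obtain ⟨hmono, σ, hσ⟩ := hμ
  have hH : (G.lapMatrix ℝ).IsHermitian := (SimpleGraph.posSemidef_lapMatrix ℝ G).1
  have hquad : 0 ≤ z ⬝ᵥ (G.lapMatrix ℝ *ᵥ z) := by
    have := (SimpleGraph.posSemidef_lapMatrix ℝ G).dotProduct_mulVec_nonneg z
    simpa using this
  by_cases hpos : 0 < μ ⟨1, by omega⟩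
  · -- positive case
    have hiff : ∀ i, hH.eigenvalues i ≠ 0 ↔ σ.symm i ≠ ⟨0, by omega⟩ := by
      intro i
      have h1 : hH.eigenvalues i = μ (σ.symm i) := lapEigs_eq G μ σ hσ i
      constructor
      · intro h he
        apply h
        rw [h1, he, hmu0]
      · intro h
        rw [h1]
        have : μ ⟨1, by omega⟩ ≤ μ (σ.symm i) := by
          apply hmono
          simp only [Fin.le_def]
          have h2 : (σ.symm i).val ≠ 0 := fun hc => h (Fin.ext hc)
          omega
        exact (lt_of_lt_of_le hpos this).ne'
    have hone : (fun _ => (1:ℝ) : Fin n → ℝ) ≠ 0 := by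
      intro h
      have := congrFun h ⟨0, by omega⟩
      simp at this
    have hcard : Fintype.card {i // hH.eigenvalues i ≠ 0} = n - 1 := by
      have e : {i // hH.eigenvalues i ≠ 0} ≃ {j : Fin n // ¬ j = ⟨0, by omega⟩} :=
        Equiv.subtypeEquiv σ.symm fun i => by rw [hiff i]
      rw [Fintype.card_congr e, Fintype.card_subtype_compl, Fintype.card_subtype_eq,
        Fintype.card_fin]
    have hrank : (G.lapMatrix ℝ).rank = n - 1 := by
      rw [hH.rank_eq_card_non_zero_eigs, hcard]
    have hkerdim : Module.finrank ℝ (LinearMap.ker (G.lapMatrix ℝ).mulVecLin) = 1 := by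
      have h := LinearMap.finrank_range_add_finrank_ker (G.lapMatrix ℝ).mulVecLin
      rw [Module.finrank_fin_fun] at h
      have : (G.lapMatrix ℝ).rank = Module.finrank ℝ (LinearMap.range (G.lapMatrix ℝ).mulVecLin) := rfl
      omega
    have hspan : Submodule.span ℝ {(fun _ => (1:ℝ) : Fin n → ℝ)}
        = LinearMap.ker (G.lapMatrix ℝ).mulVecLin := by
      apply Submodule.eq_of_le_of_finrank_le
      · rw [Submodule.span_le, Set.singleton_subset_iff]
        simp only [SetLike.mem_coe, LinearMap.mem_ker, Matrix.mulVecLin_apply]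
        exact G.lapMatrix_mulVec_const_eq_zero
      · rw [hkerdim, finrank_span_singleton hone]
    have hker : ∀ i, hH.eigenvalues i = 0 → coeffs (G.lapMatrix ℝ) hH z i = 0 := by
      intro i hi
      have hmem : (fun j => (hH.eigenvectorUnitary : Matrix (Fin n) (Fin n) ℝ) j i)
          ∈ LinearMap.ker (G.lapMatrix ℝ).mulVecLin := by
        rw [LinearMap.mem_ker, Matrix.mulVecLin_apply, eigcol _ hH i, hi, zero_smul]
      rw [← hspan] at hmem
      obtain ⟨t, ht⟩ := Submodule.mem_span_singleton.mp hmem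
      rw [coeffs_apply]
      have hcol : ∀ j, (hH.eigenvectorUnitary : Matrix (Fin n) (Fin n) ℝ) j i = t := by
        intro j
        have := congrFun ht j
        simpa using this.symm
      simp_rw [hcol, ← Finset.mul_sum, hz, mul_zero]
    rw [quad_eq _ hH z, norm_eq _ hH z, Finset.mul_sum]
    refine Finset.sum_le_sum fun i _ => ?_
    by_cases h0 : hH.eigenvalues i = 0
    · rw [hker i h0, h0]
      simp
    · have h1 : hH.eigenvalues i = μ (σ.symm i) := lapEigs_eq G μ σ hσ i
      have : μ ⟨1, by omega⟩ ≤ hH.eigenvalues i := by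
        rw [h1]
        apply hmono
        simp only [Fin.le_def]
        have h2 : (σ.symm i).val ≠ 0 := by
          intro hc
          exact (hiff i).mp h0 (Fin.ext hc)
        omega
      nlinarith [sq_nonneg (coeffs (G.lapMatrix ℝ) hH z i)]
  · push_neg at hpos
    have hzz : 0 ≤ z ⬝ᵥ z := Finset.sum_nonneg fun i _ => mul_self_nonneg _
    nlinarith

end rayleigh

theorem stmt3 {n : ℕ} (hn : 2 ≤ n) (G : SimpleGraph (Fin n)) [DecidableRel G.Adj]
    (hedge : ∃ v w, G.Adj v w) (μ : Fin n → ℝ) (hμ : IsLapSpectrum G μ)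
    (S X Y : Finset (Fin n)) (hdis : 2 ≤ numComp G S)
    (hX : X.Nonempty) (hY : Y.Nonempty) (hXY : Disjoint X Y) (hpart : X ∪ Y = Sᶜ)
    (hsep : ∀ x ∈ X, ∀ y ∈ Y, ¬ G.Adj x y) (hcard : X.card ≤ Y.card)
    (hlt : μ ⟨1, by omega⟩ < μ ⟨n - 1, by omega⟩) :
    2 * μ ⟨1, by omega⟩ * X.card / (μ ⟨n - 1, by omega⟩ - μ ⟨1, by omega⟩) ≤ (S.card : ℝ) := by
  obtain ⟨hmono, σ, hσ⟩ := id hμ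
  set a : ℝ := (X.card : ℝ) with ha_def
  set b : ℝ := (Y.card : ℝ) with hb_def
  set s : ℝ := (S.card : ℝ) with hs_def
  set A1 : ℝ := μ ⟨1, by omega⟩ with hA1_def
  set A2 : ℝ := μ ⟨n - 1, by omega⟩ with hA2_def
  have hn0 : (0:ℝ) < n := by positivity
  -- cardinalities
  have hcards : X.card + Y.card + S.card = n := by
    have h1 : (X ∪ Y).card = X.card + Y.card := Finset.card_union_of_disjoint hXY
    have h2 : (Sᶜ : Finset (Fin n)).card = n - S.card := by
      rw [Finset.card_compl, Fintype.card_fin]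
    have h3 : S.card ≤ n := by
      have := Finset.card_le_univ S
      simpa using this
    rw [hpart] at h1
    omega
  have habs : a + b + s = (n : ℝ) := by
    rw [ha_def, hb_def, hs_def]
    exact_mod_cast congrArg (Nat.cast : ℕ → ℝ) hcards
  have ha1 : (1:ℝ) ≤ a := by
    rw [ha_def]; exact_mod_cast hX.card_pos
  have hba : a ≤ b := by rw [ha_def, hb_def]; exact_mod_cast hcard
  have hs0 : (0:ℝ) ≤ s := by rw [hs_def]; positivity
  have hA1nn : 0 ≤ A1 := by
    rw [hA1_def, hσ]
    exact (SimpleGraph.posSemidef_lapMatrix ℝ G).eigenvalues_nonneg _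
  -- membership facts
  have hmemS : ∀ v : Fin n, v ∉ X → v ∉ Y → v ∈ S := by
    intro v hvx hvy
    by_contra hvs
    have : v ∈ X ∪ Y := by rw [hpart]; exact Finset.mem_compl.mpr hvs
    rcases Finset.mem_union.mp this with h | h
    exacts [hvx h, hvy h]
  have hXS : ∀ v : Fin n, v ∈ X → v ∉ S := by
    intro v hv hvs
    have : v ∈ Sᶜ := hpart ▸ Finset.mem_union_left _ hv
    exact Finset.mem_compl.mp this hvs
  have hYS : ∀ v : Fin n, v ∈ Y → v ∉ S := by
    intro v hv hvs
    have : v ∈ Sᶜ := hpart ▸ Finset.mem_union_right _ hv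
    exact Finset.mem_compl.mp this hvs
  have hXYd : ∀ v : Fin n, v ∈ X → v ∉ Y := fun v hv hv' => Finset.disjoint_left.mp hXY hv hv'
  -- test vectors
  set z : Fin n → ℝ := fun v => (if v ∈ X then 1 else 0) - (if v ∈ Y then 1 else 0) with hz_def
  set u : Fin n → ℝ := fun v => if v ∈ S then 1 else 0 with hu_def
  have hsum_ind : ∀ (T : Finset (Fin n)), ∑ v, (if v ∈ T then (1:ℝ) else 0) = T.card := by
    intro T
    rw [Finset.sum_ite_mem, Finset.univ_inter, Finset.sum_const, nsmul_eq_mul, mul_one]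
  have hzsum : ∑ v, z v = a - b := by
    simp only [hz_def]
    rw [Finset.sum_sub_distrib, hsum_ind, hsum_ind]
  have hzsq : ∑ v, z v * z v = a + b := by
    have hpt : ∀ v, z v * z v = (if v ∈ X then (1:ℝ) else 0) + (if v ∈ Y then 1 else 0) := by
      intro v
      simp only [hz_def]
      by_cases hx : v ∈ X
      · have hy := hXYd v hx
        simp [hx, hy]
      · by_cases hy : v ∈ Y <;> simp [hx, hy]
    rw [Finset.sum_congr rfl fun v _ => hpt v, Finset.sum_add_distrib, hsum_ind, hsum_ind]
  have husum : ∑ v, u v = s := hsum_ind S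
  have husq : ∑ v, u v * u v = s := by
    have hpt : ∀ v, u v * u v = u v := by
      intro v
      simp only [hu_def]
      by_cases hv : v ∈ S <;> simp [hv]
    rw [Finset.sum_congr rfl fun v _ => hpt v, husum]
  -- equal quadratic forms
  have hQ : z ⬝ᵥ (G.lapMatrix ℝ *ᵥ z) = u ⬝ᵥ (G.lapMatrix ℝ *ᵥ u) := by
    have h1 := G.lapMatrix_toLinearMap₂' (R := ℝ) z
    have h2 := G.lapMatrix_toLinearMap₂' (R := ℝ) u
    rw [toLinearMap₂'_apply'] at h1 h2
    rw [h1, h2]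
    congr 1
    refine Finset.sum_congr rfl fun i _ => Finset.sum_congr rfl fun j _ => ?_
    by_cases hadj : G.Adj i j
    · simp only [hadj, if_true]
      by_cases hiX : i ∈ X
      · have hiY := hXYd i hiX
        have hiS := hXS i hiX
        by_cases hjX : j ∈ X
        · simp [hz_def, hu_def, hiX, hiY, hiS, hjX, hXYd j hjX, hXS j hjX]
        · by_cases hjY : j ∈ Y
          · exact absurd hadj (hsep i hiX j hjY)
          · have hjS := hmemS j hjX hjY
            simp [hz_def, hu_def, hiX, hiY, hiS, hjX, hjY, hjS]
      · by_cases hiY : i ∈ Y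
        · have hiS := hYS i hiY
          by_cases hjX : j ∈ X
          · exact absurd hadj.symm (hsep j hjX i hiY)
          · by_cases hjY : j ∈ Y
            · simp [hz_def, hu_def, hiX, hiY, hiS, hjX, hjY, hYS j hjY]
            · have hjS := hmemS j hjX hjY
              simp [hz_def, hu_def, hiX, hiY, hiS, hjX, hjY, hjS]
        · have hiS := hmemS i hiX hiY
          by_cases hjX : j ∈ X
          · have := hXS j hjX
            simp [hz_def, hu_def, hiX, hiY, hiS, hjX, hXYd j hjX, this] <;> ring
          · by_cases hjY : j ∈ Y
            · have := hYS j hjY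
              simp [hz_def, hu_def, hiX, hiY, hiS, hjX, hjY, this] <;> ring
            · have hjS := hmemS j hjX hjY
              simp [hz_def, hu_def, hiX, hiY, hiS, hjX, hjY, hjS]
    · simp [hadj]
  -- shift invariance of the quadratic form
  have hshift : ∀ (x : Fin n → ℝ) (t : ℝ),
      (fun v => x v - t) ⬝ᵥ (G.lapMatrix ℝ *ᵥ (fun v => x v - t)) = x ⬝ᵥ (G.lapMatrix ℝ *ᵥ x) := by
    intro x t
    have h1 := G.lapMatrix_toLinearMap₂' (R := ℝ) (fun v => x v - t)
    have h2 := G.lapMatrix_toLinearMap₂' (R := ℝ) x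
    rw [toLinearMap₂'_apply'] at h1 h2
    rw [h1, h2]
    congr 1
    refine Finset.sum_congr rfl fun i _ => Finset.sum_congr rfl fun j _ => ?_
    by_cases hadj : G.Adj i j
    · simp only [hadj, if_true]
      ring
    · simp [hadj]
  -- dot product expansion for shifted vectors
  have hexpand : ∀ (x : Fin n → ℝ) (t : ℝ),
      (fun v => x v - t) ⬝ᵥ (fun v => x v - t)
        = (∑ v, x v * x v) - 2 * t * (∑ v, x v) + n * t^2 := by
    intro x t
    simp only [dotProduct]
    rw [Finset.sum_congr rfl fun v _ =>
      show (x v - t) * (x v - t) = (x v * x v) - (2*t) * x v + t^2 by ring]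
    rw [Finset.sum_add_distrib, Finset.sum_sub_distrib, ← Finset.mul_sum, Finset.sum_const,
      Finset.card_univ, Fintype.card_fin, nsmul_eq_mul]
    try ring
  -- lower bound
  have hlow : A1 * ((a + b) - (a-b)^2 / n) ≤ z ⬝ᵥ (G.lapMatrix ℝ *ᵥ z) := by
    have hzero : ∑ v, (z v - (a-b)/n) = 0 := by
      rw [Finset.sum_sub_distrib, hzsum, Finset.sum_const, Finset.card_univ, Fintype.card_fin,
        nsmul_eq_mul]
      field_simp
      ring
    have := rayleigh_lower hn G μ hμ (fun v => z v - (a-b)/n) hzero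
    rw [hshift z ((a-b)/n), hexpand z ((a-b)/n), hzsum] at this
    calc A1 * ((a + b) - (a-b)^2 / n)
        = A1 * ((∑ v, z v * z v) - 2 * ((a-b)/n) * (a-b) + n * ((a-b)/n)^2) := by
          rw [hzsq]; congr 1; field_simp <;> ring
      _ ≤ _ := this
  -- upper bound
  have hup : u ⬝ᵥ (G.lapMatrix ℝ *ᵥ u) ≤ A2 * (s - s^2 / n) := by
    have := rayleigh_upper hn G μ hμ (fun v => u v - s/n)
    rw [hshift u (s/n), hexpand u (s/n), husum, husq] at this
    calc u ⬝ᵥ (G.lapMatrix ℝ *ᵥ u) ≤ A2 * (s - 2 * (s/n) * s + n * (s/n)^2) := this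
      _ = A2 * (s - s^2 / n) := by congr 1; field_simp <;> ring
  have hmain : A1 * ((a + b) - (a-b)^2 / n) ≤ A2 * (s - s^2 / n) := by
    calc A1 * ((a + b) - (a-b)^2 / n) ≤ z ⬝ᵥ (G.lapMatrix ℝ *ᵥ z) := hlow
      _ = u ⬝ᵥ (G.lapMatrix ℝ *ᵥ u) := hQ
      _ ≤ A2 * (s - s^2 / n) := hup
  -- numeric endgame
  have hmain' : A1 * ((a+b) * n - (a-b)^2) ≤ A2 * (s * n - s^2) := by
    have h := mul_le_mul_of_nonneg_right hmain (le_of_lt hn0)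
    have e1 : A1 * ((a + b) - (a-b)^2 / n) * n = A1 * ((a+b) * n - (a-b)^2) := by
      field_simp <;> ring
    have e2 : A2 * (s - s^2 / n) * n = A2 * (s * n - s^2) := by
      field_simp <;> ring
    rwa [e1, e2] at h
  have h4 : (a+b) * (n:ℝ) - (a-b)^2 = 4*a*b + (a+b)*s := by rw [← habs]; ring
  have h5 : s * (n:ℝ) - s^2 = s*(a+b) := by rw [← habs]; ring
  rw [h4, h5] at hmain'
  rw [div_le_iff₀ (by linarith : (0:ℝ) < A2 - A1)]
  have hfin : 2 * A1 * a * (a+b) ≤ s * (A2 - A1) * (a+b) := by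
    nlinarith [hmain', mul_nonneg (mul_nonneg hA1nn (by linarith : (0:ℝ) ≤ a))
      (by linarith : (0:ℝ) ≤ b - a)]
  exact le_of_mul_le_mul_right hfin (by linarith)
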